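/- Let n ≥ 1, let U ⊆ [0,∞)^n be closed in ℝ^n, let U' ⊆ U, and let RC ⊆ ℝ^n be any set with 0 < λ(RC) < ∞, where λ denotes n-dimensional Lebesgue (outer) measure. Then λ(RC ∩ E(Min_≺(U)))/λ(RC) ≤ λ(RC ∩ E(Min_≺(U')))/λ(RC). -/

import Mathlib

/-!
A closed set `U` has the same stable zone as its `≺`-minimal elements: below any `ε ∈ U` the
set `{x ∈ U | x ⪯ ε}` is compact, and a minimiser of `∑ i, |x i|` on it is `≺`-minimal in `U`.
Hence `E(Min_≺(U)) = E(U) ⊆ E(U') ⊆ E(Min_≺(U'))`, since `E` is antitone.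
-/

/-- Refinement containment: `ε ⪯ ε′` iff `|ε i| ≤ |ε′ i|` for every coordinate. -/
def refCont {ι : Type*} (ε ε' : ι → ℝ) : Prop := ∀ i, |ε i| ≤ |ε' i|

/-- Strict refinement containment: `ε ≺ ε′` iff `ε ⪯ ε′` and `|ε i| < |ε′ i|` for some `i`. -/
def refSCont {ι : Type*} (ε ε' : ι → ℝ) : Prop := refCont ε ε' ∧ ∃ i, |ε i| < |ε' i|

/-- `Min_≺(R)`: the elements of `R` that strictly contain no element of `R`. -/
def minSet {ι : Type*} (R : Set (ι → ℝ)) : Set (ι → ℝ) :=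
  {ε ∈ R | ¬ ∃ ε' ∈ R, refSCont ε' ε}

/-- `E(R)`: the set of refinements containing no refinement of `R`. -/
def eSet {ι : Type*} (R : Set (ι → ℝ)) : Set (ι → ℝ) :=
  {ε | ¬ ∃ ε' ∈ R, refCont ε' ε}

open MeasureTheory

section

variable {ι : Type*}

theorem refCont.refl (ε : ι → ℝ) : refCont ε ε := fun _ => le_rfl

theorem refCont.trans {ε ε' ε'' : ι → ℝ} (h : refCont ε ε') (h' : refCont ε' ε'') :
    refCont ε ε'' := fun i => (h i).trans (h' i)

theorem minSet_subset (R : Set (ι → ℝ)) : minSet R ⊆ R := fun _ hε => hε.1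

theorem eSet_anti {R R' : Set (ι → ℝ)} (h : R ⊆ R') : eSet R' ⊆ eSet R :=
  fun _ hε ⟨ε', hε'R, hcont⟩ => hε ⟨ε', h hε'R, hcont⟩

theorem isCompact_setOf_refCont (ε : ι → ℝ) : IsCompact {x : ι → ℝ | refCont x ε} := by
  have hclosed : IsClosed {x : ι → ℝ | refCont x ε} := by
    simp only [refCont, Set.ofPred_forall]
    exact isClosed_iInter fun i =>
      isClosed_le (continuous_abs.comp (continuous_apply i)) continuous_const
  refine (isCompact_univ_pi fun i => isCompact_Icc (a := -|ε i|) (b := |ε i|)).of_isClosed_subset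
    hclosed ?_
  exact fun x hx i _ => abs_le.mp (hx i)

theorem exists_mem_minSet_refCont [Fintype ι] {U : Set (ι → ℝ)} (hU : IsClosed U)
    {ε : ι → ℝ} (hε : ε ∈ U) : ∃ m ∈ minSet U, refCont m ε := by
  set K := U ∩ {x | refCont x ε}
  have hK : IsCompact K := (isCompact_setOf_refCont ε).inter_left hU
  obtain ⟨m, ⟨hmU, hmε⟩, hmin⟩ := hK.exists_isMinOn ⟨ε, hε, refCont.refl ε⟩
    (continuous_finsetSum Finset.univ fun i _ =>
      continuous_abs.comp (continuous_apply i)).continuousOn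
  refine ⟨m, ⟨hmU, ?_⟩, hmε⟩
  rintro ⟨u, huU, hum, i, hui⟩
  have hlt : ∑ j, |u j| < ∑ j, |m j| :=
    Finset.sum_lt_sum (fun j _ => hum j) ⟨i, Finset.mem_univ i, hui⟩
  exact (hmin ⟨huU, hum.trans hmε⟩).not_gt hlt

theorem eSet_minSet_of_isClosed [Fintype ι] {U : Set (ι → ℝ)} (hU : IsClosed U) :
    eSet (minSet U) = eSet U := by
  refine (eSet_anti (minSet_subset U)).antisymm' fun ε hε ⟨ε', hε'U, hcont⟩ => ?_
  obtain ⟨m, hm, hmε'⟩ := exists_mem_minSet_refCont hU hε'U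
  exact hε ⟨m, hm, hmε'.trans hcont⟩

end

theorem stability_mono_general {n : ℕ} (U U' : Set (Fin n → ℝ))
    (hclosed : IsClosed U) (hsub : U' ⊆ U)
    (RC : Set (Fin n → ℝ)) :
    volume (RC ∩ eSet (minSet U)) / volume RC ≤
      volume (RC ∩ eSet (minSet U')) / volume RC := by
  have hzone : eSet (minSet U) ⊆ eSet (minSet U') := by
    rw [eSet_minSet_of_isClosed hclosed]
    exact (eSet_anti hsub).trans (eSet_anti (minSet_subset U'))
  exact ENNReal.div_le_div_right (measure_mono (Set.inter_subset_inter_right RC hzone)) _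

/-- Local stability is monotone: if `U' ⊆ U` then the relative volume of the stable
zone of `U` inside `RC` is at most that of the stable zone of `U'`. -/
theorem stability_mono {n : ℕ} (hn : 1 ≤ n) (U U' : Set (Fin n → ℝ))
    (hU : U ⊆ {x | ∀ i, 0 ≤ x i}) (hclosed : IsClosed U) (hsub : U' ⊆ U)
    (RC : Set (Fin n → ℝ)) (hRC0 : 0 < volume RC) (hRCtop : volume RC < ⊤) :
    volume (RC ∩ eSet (minSet U)) / volume RC ≤
      volume (RC ∩ eSet (minSet U')) / volume RC :=
  stability_mono_general U U' hclosed hsub RC
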